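/- If T is a linear isometry of (V, d_{w,(P,π)}), then for every i ∈ [s] there is a unique j ∈ [s] such that T(V_i) ⊆ V_{⟨j⟩} and |⟨i⟩| = |⟨j⟩|; moreover, for every nonzero v_i ∈ V_i there exist a nonzero u_j ∈ V_j and γ_j ∈ V_{⟨j⟩*} with T(v_i) = u_j + γ_j and W_i(v_i) = W_j(u_j). -/

import Mathlib

/-!
Induct on `|⟨t⟩|`, for `T` and `T⁻¹` at once. If `T` maps each `V_⟨s⟩`, `s < t`, onto some
`V_⟨σ s⟩`, it maps `V_⟨t⟩*` onto `V_A` for a lower set `A`, and `|A| = |⟨t⟩*|` because on `V_Q`,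
`Q` a lower set, the maximum of `ω` is `|Q| M_w`. For `0 ≠ v ∈ V_t` let `z` be the part of `T v`
outside `A`. Each `z + g`, `g ∈ V_A`, is `T (v + x)` with `x ∈ V_⟨t⟩*`, so it has weight
`W_t v + |A| M_w`. Comparing `g = 0` with `g` filling `A` by a scalar of maximal weight gives
`A ⊆ ⟨supp z⟩`; counting then shows that `supp z` is an antichain of total weight `W_t v ≤ M_w`.
Rescaling `v` shows that it is a single block `j`, the same for all `v`, and `⟨j⟩ = A ∪ {j}`.
Running the same argument for `T⁻¹` at `j` gives the converse inclusion `T⁻¹ V_⟨j⟩ ⊆ V_⟨t⟩`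
needed for the induction.
-/

attribute [local instance] Classical.propDecidable

noncomputable section

variable {ι F : Type*}

section Defs
variable [Fintype ι] [PartialOrder ι] [Field F] [Fintype F] {k : ι → ℕ}

/-- block support -/
def suppB (u : ∀ i, Fin (k i) → F) : Finset ι :=
  Finset.univ.filter fun i => u i ≠ 0

/-- order ideal generated by the block support -/
def idealOf (u : ∀ i, Fin (k i) → F) : Finset ι :=
  Finset.univ.filter fun i => ∃ j ∈ suppB u, i ≤ j

/-- maximal elements of the ideal generated by the support -/
def maxOf (u : ∀ i, Fin (k i) → F) : Finset ι :=
  (idealOf u).filter fun i => ∀ j ∈ idealOf u, i ≤ j → i = j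

/-- maximal weight of a block -/
def Wblk (w : F → ℕ) (u : ∀ i, Fin (k i) → F) (i : ι) : ℕ :=
  Finset.univ.sup fun j => w (u i j)

/-- maximal value of the weight -/
def Mw (w : F → ℕ) : ℕ := Finset.univ.sup w

/-- minimal value of the weight on nonzero elements -/
def mw (w : F → ℕ) : ℕ := sInf (w '' {a | a ≠ 0})

/-- the weighted poset block weight -/
def omegaW (w : F → ℕ) (u : ∀ i, Fin (k i) → F) : ℕ :=
  (∑ i ∈ maxOf u, Wblk w u i) + (idealOf u \ maxOf u).card * Mw w

/-- principal ideal generated by `i` -/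
def pIdeal (i : ι) : Finset ι := Finset.univ.filter fun j => j ≤ i

end Defs

open Finset

section PrincipalIdeal
variable [Fintype ι] [PartialOrder ι]

theorem mem_pIdeal {i j : ι} : j ∈ pIdeal i ↔ j ≤ i := by
  simp [pIdeal]

theorem mem_pIdeal_self (i : ι) : i ∈ pIdeal i :=
  mem_pIdeal.2 le_rfl

theorem singleton_subset_pIdeal (i : ι) : {i} ⊆ pIdeal i :=
  singleton_subset_iff.2 (mem_pIdeal_self i)

theorem mem_pIdeal_erase {i j : ι} : j ∈ (pIdeal i).erase i ↔ j < i := by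
  rw [mem_erase, mem_pIdeal, lt_iff_le_and_ne, and_comm]

theorem isLowerSet_pIdeal (i : ι) : IsLowerSet (pIdeal i : Set ι) := fun _ _ hba ha =>
  mem_pIdeal.2 (hba.trans (mem_pIdeal.1 ha))

theorem isLowerSet_pIdeal_erase (i : ι) : IsLowerSet ((pIdeal i).erase i : Set ι) :=
  fun _ _ hba ha => mem_pIdeal_erase.2 (hba.trans_lt (mem_pIdeal_erase.1 ha))

theorem pIdeal_subset_pIdeal {i j : ι} (h : i ≤ j) : pIdeal i ⊆ pIdeal j := fun _ hl =>
  mem_pIdeal.2 ((mem_pIdeal.1 hl).trans h)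

theorem card_pIdeal_lt_card_pIdeal {i j : ι} (h : i < j) : (pIdeal i).card < (pIdeal j).card :=
  card_lt_card ((ssubset_iff_of_subset (pIdeal_subset_pIdeal h.le)).2
    ⟨j, mem_pIdeal_self j, fun hj => h.not_ge (mem_pIdeal.1 hj)⟩)

end PrincipalIdeal

section Weight
variable {k : ι → ℕ} {w : F → ℕ} {u v : ∀ i, Fin (k i) → F} {i : ι}

theorem Wblk_congr (h : u i = v i) : Wblk w u i = Wblk w v i := by
  simp only [Wblk, h]

theorem Wblk_of_eq_const {c : F} (hk : 0 < k i) (h : u i = fun _ => c) : Wblk w u i = w c := by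
  simp only [Wblk, h]
  exact sup_const ⟨⟨0, hk⟩, mem_univ _⟩ _

theorem Wblk_pos_iff [Zero F] (hw0 : ∀ a : F, w a = 0 ↔ a = 0) : 0 < Wblk w u i ↔ u i ≠ 0 := by
  simp [Wblk, Finset.lt_sup_iff, pos_iff_ne_zero, hw0, funext_iff]

variable [Fintype F]

theorem Wblk_le_Mw : Wblk w u i ≤ Mw w :=
  Finset.sup_le fun _ _ => le_sup (mem_univ _)

theorem exists_eq_Mw [Nonempty F] (w : F → ℕ) : ∃ c, w c = Mw w :=
  let ⟨c, _, hc⟩ := exists_mem_eq_sup univ univ_nonempty w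
  ⟨c, hc.symm⟩

theorem Mw_pos [Zero F] [Nontrivial F] (hw0 : ∀ a : F, w a = 0 ↔ a = 0) : 0 < Mw w :=
  let ⟨a, ha⟩ := exists_ne (0 : F)
  (pos_iff_ne_zero.2 ((hw0 a).not.2 ha)).trans_le (le_sup (f := w) (mem_univ a))

theorem ne_zero_of_eq_Mw [Zero F] [Nontrivial F] (hw0 : ∀ a : F, w a = 0 ↔ a = 0) {c : F}
    (hc : w c = Mw w) : c ≠ 0 :=
  fun h => (Mw_pos hw0).ne' (hc ▸ h ▸ (hw0 0).2 rfl)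

end Weight

section BlockSpace
variable [Field F] {k : ι → ℕ}

variable (F k) in
def blockSpace (Q : Finset ι) : Submodule F (∀ i, Fin (k i) → F) where
  carrier := {u | ∀ i ∉ Q, u i = 0}
  add_mem' hu hv i hi := by simp [hu i hi, hv i hi]
  zero_mem' _ _ := rfl
  smul_mem' c u hu i hi := by simp [hu i hi]

variable (F k) in
def blockProj (Q : Finset ι) : (∀ i, Fin (k i) → F) →ₗ[F] (∀ i, Fin (k i) → F) where
  toFun u := Q.piecewise u 0
  map_add' u v := by ext i; by_cases h : i ∈ Q <;> simp [h]
  map_smul' c u := by ext i; by_cases h : i ∈ Q <;> simp [h]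

theorem blockSpace_mono {Q P : Finset ι} (h : Q ⊆ P) : blockSpace F k Q ≤ blockSpace F k P :=
  fun _ hu i hi => hu i fun hQ => hi (h hQ)

theorem apply_eq_zero_of_mem_blockSpace {Q : Finset ι} {u : ∀ i, Fin (k i) → F}
    (hu : u ∈ blockSpace F k Q) {i : ι} (hi : i ∉ Q) : u i = 0 :=
  hu i hi

theorem blockProj_apply (Q : Finset ι) (u : ∀ i, Fin (k i) → F) (i : ι) :
    blockProj F k Q u i = if i ∈ Q then u i else 0 :=
  rfl

end BlockSpace

section BlockSupport
variable [Fintype ι] [Field F] {k : ι → ℕ} {u : ∀ i, Fin (k i) → F} {Q : Finset ι}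

theorem mem_suppB {i : ι} : i ∈ suppB u ↔ u i ≠ 0 := by
  simp [suppB]

theorem suppB_nonempty : (suppB u).Nonempty ↔ u ≠ 0 := by
  simp [Finset.Nonempty, mem_suppB, funext_iff]

theorem suppB_smul {α : F} (hα : α ≠ 0) (u : ∀ i, Fin (k i) → F) : suppB (α • u) = suppB u := by
  ext i
  simp [mem_suppB, hα]

theorem mem_blockSpace : u ∈ blockSpace F k Q ↔ suppB u ⊆ Q := by
  change (∀ i ∉ Q, u i = 0) ↔ _
  simp only [subset_iff, mem_suppB]
  exact forall_congr' fun i => not_imp_comm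

theorem suppB_blockProj : suppB (blockProj F k Q u) = suppB u ∩ Q := by
  ext i
  by_cases hi : i ∈ Q <;> simp [mem_suppB, blockProj_apply, hi]

theorem apply_ne_zero_iff_of_mem_blockSpace_singleton {t : ι} (hu : u ∈ blockSpace F k {t}) :
    u t ≠ 0 ↔ u ≠ 0 := by
  rw [← suppB_nonempty, ← mem_suppB]
  exact ⟨fun h => ⟨t, h⟩, fun ⟨i, hi⟩ => mem_singleton.1 (mem_blockSpace.1 hu hi) ▸ hi⟩

theorem suppB_subset_union_suppB_blockProj_compl (Q : Finset ι) (u : ∀ i, Fin (k i) → F) :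
    suppB u ⊆ Q ∪ suppB (blockProj F k Qᶜ u) := fun i hi => by
  rw [suppB_blockProj, mem_union, mem_inter, mem_compl]
  tauto

theorem blockProj_mem_blockSpace : blockProj F k Q u ∈ blockSpace F k Q :=
  mem_blockSpace.2 (suppB_blockProj.trans_subset inter_subset_right)

theorem exists_mem_blockSpace_singleton_ne_zero {t : ι} (hk : 0 < k t) :
    ∃ u ∈ blockSpace F k {t}, u ≠ 0 := by
  refine ⟨blockProj F k {t} fun _ _ => 1, blockProj_mem_blockSpace, fun h => ?_⟩
  have := congrFun (congrFun h t) ⟨0, hk⟩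
  simp [blockProj_apply] at this

theorem blockProj_add_blockProj_compl (Q : Finset ι) (u : ∀ i, Fin (k i) → F) :
    blockProj F k Q u + blockProj F k Qᶜ u = u := by
  ext i
  by_cases hi : i ∈ Q <;> simp [blockProj_apply, hi]

theorem sum_blockProj_singleton (hu : u ∈ blockSpace F k Q) :
    ∑ s ∈ Q, blockProj F k {s} u = u := by
  ext i j
  by_cases hi : i ∈ Q
  · simp [Finset.sum_apply, blockProj_apply, ite_apply, hi]
  · have : u i = 0 := not_not.1 fun h => hi (mem_blockSpace.1 hu (mem_suppB.2 h))
    simp [Finset.sum_apply, blockProj_apply, this]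

theorem map_mem_of_forall_blockSpace_singleton {M : Type*} [AddCommGroup M] [Module F M]
    (f : (∀ i, Fin (k i) → F) →ₗ[F] M) {p : Submodule F M}
    (h : ∀ s ∈ Q, ∀ v ∈ blockSpace F k {s}, f v ∈ p) (hu : u ∈ blockSpace F k Q) : f u ∈ p := by
  rw [← sum_blockProj_singleton hu, map_sum]
  exact p.sum_mem fun s hs => h s hs _ blockProj_mem_blockSpace

end BlockSupport

section OrderIdeal
variable [Fintype ι] [PartialOrder ι] [Field F] {k : ι → ℕ} {u z : ∀ i, Fin (k i) → F}

theorem mem_idealOf {i : ι} : i ∈ idealOf u ↔ ∃ j ∈ suppB u, i ≤ j := by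
  simp [idealOf]

theorem suppB_subset_idealOf (u : ∀ i, Fin (k i) → F) : suppB u ⊆ idealOf u := fun i hi =>
  mem_idealOf.2 ⟨i, hi, le_rfl⟩

theorem idealOf_subset {Q : Finset ι} (hQ : IsLowerSet (Q : Set ι)) (hu : suppB u ⊆ Q) :
    idealOf u ⊆ Q := fun _ hi =>
  let ⟨_, hj, hij⟩ := mem_idealOf.1 hi
  hQ hij (hu hj)

theorem idealOf_eq_of_suppB_eq_union {A : Finset ι} (hA : IsLowerSet (A : Set ι))
    (h : suppB u = suppB z ∪ A) : idealOf u = idealOf z ∪ A := by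
  ext i
  simp only [mem_union, mem_idealOf, h]
  constructor
  · rintro ⟨j, hj | hj, hij⟩
    exacts [Or.inl ⟨j, hj, hij⟩, Or.inr (hA hij hj)]
  · rintro (⟨j, hj, hij⟩ | hi)
    exacts [⟨j, Or.inl hj, hij⟩, ⟨i, Or.inr hi, le_rfl⟩]

theorem idealOf_of_suppB_eq_singleton {j : ι} (h : suppB u = {j}) : idealOf u = pIdeal j := by
  ext i
  simp [mem_idealOf, h, mem_pIdeal]

theorem mem_maxOf {i : ι} : i ∈ maxOf u ↔ i ∈ idealOf u ∧ ∀ j ∈ idealOf u, i ≤ j → i = j := by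
  simp [maxOf]

theorem maxOf_subset_idealOf (u : ∀ i, Fin (k i) → F) : maxOf u ⊆ idealOf u := filter_subset _ _

theorem maxOf_subset_suppB (u : ∀ i, Fin (k i) → F) : maxOf u ⊆ suppB u := fun i hi => by
  obtain ⟨hi, hmax⟩ := mem_maxOf.1 hi
  obtain ⟨j, hj, hij⟩ := mem_idealOf.1 hi
  rwa [hmax j (suppB_subset_idealOf u hj) hij]

theorem exists_mem_maxOf_le {i : ι} (hi : i ∈ idealOf u) : ∃ e ∈ maxOf u, i ≤ e := by
  obtain ⟨e, hie, he, hmax⟩ := (idealOf u).exists_le_maximal hi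
  exact ⟨e, mem_maxOf.2 ⟨he, fun j hj hej => (hmax hj hej).antisymm' hej⟩, hie⟩

theorem maxOf_nonempty (hu : u ≠ 0) : (maxOf u).Nonempty := by
  obtain ⟨i, hi⟩ := suppB_nonempty.2 hu
  obtain ⟨e, he, -⟩ := exists_mem_maxOf_le (suppB_subset_idealOf u hi)
  exact ⟨e, he⟩

theorem suppB_blockProj_compl_singleton_subset {j : ι} (hu : u ∈ blockSpace F k (pIdeal j)) :
    suppB (blockProj F k {j}ᶜ u) ⊆ (pIdeal j).erase j := fun i hi => by
  rw [suppB_blockProj, mem_inter, mem_compl, mem_singleton] at hi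
  exact mem_erase.2 ⟨hi.2, mem_blockSpace.1 hu hi.1⟩

theorem mem_suppB_add_of_forall_lt {j : ι} (hu : u ∈ blockSpace F k {j}) (hu0 : u ≠ 0)
    (hz : ∀ l ∈ suppB z, l < j) : j ∈ suppB (u + z) := by
  have hzj : z j = 0 := not_not.1 fun h => lt_irrefl j (hz j (mem_suppB.2 h))
  rw [mem_suppB, Pi.add_apply, hzj, add_zero]
  exact (apply_ne_zero_iff_of_mem_blockSpace_singleton hu).2 hu0

theorem exists_eq_add_of_mem_blockSpace_pIdeal {w : F → ℕ} {j : ι}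
    (hu : u ∈ blockSpace F k (pIdeal j)) (huj : u j ≠ 0) :
    ∃ v γ : ∀ i, Fin (k i) → F, u = v + γ ∧ suppB v ⊆ {j} ∧ v ≠ 0 ∧
      (∀ l ∈ suppB γ, l < j) ∧ Wblk w u j = Wblk w v j := by
  have hjj : blockProj F k {j} u j = u j := by rw [blockProj_apply, if_pos (mem_singleton_self j)]
  exact ⟨_, _, (blockProj_add_blockProj_compl {j} u).symm,
    mem_blockSpace.1 blockProj_mem_blockSpace,
    (apply_ne_zero_iff_of_mem_blockSpace_singleton blockProj_mem_blockSpace).1 (hjj ▸ huj),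
    fun l hl => mem_pIdeal_erase.1 (suppB_blockProj_compl_singleton_subset hu hl),
    Wblk_congr hjj.symm⟩

end OrderIdeal

section Omega
variable [Fintype ι] [PartialOrder ι] [Field F] [Fintype F] {k : ι → ℕ} {w : F → ℕ}
  {u : ∀ i, Fin (k i) → F}

def defect (w : F → ℕ) (u : ∀ i, Fin (k i) → F) : ℕ :=
  ∑ e ∈ maxOf u, (Mw w - Wblk w u e)

theorem omegaW_add_defect : omegaW w u + defect w u = (idealOf u).card * Mw w := by
  have hmax : ∑ e ∈ maxOf u, Wblk w u e + defect w u = (maxOf u).card * Mw w := by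
    rw [defect, ← sum_add_distrib, sum_const_nat fun e _ => Nat.add_sub_cancel' Wblk_le_Mw]
  rw [← card_sdiff_add_card_eq_card (maxOf_subset_idealOf u), add_mul, ← hmax, omegaW]
  ring

theorem omegaW_le : omegaW w u ≤ (idealOf u).card * Mw w :=
  omegaW_add_defect (w := w) (u := u) ▸ Nat.le_add_right _ _

theorem omegaW_pos (hw0 : ∀ a : F, w a = 0 ↔ a = 0) (hu : u ≠ 0) : 0 < omegaW w u := by
  obtain ⟨e, he⟩ := maxOf_nonempty hu
  have hWe : 0 < Wblk w u e := (Wblk_pos_iff hw0).2 (mem_suppB.1 (maxOf_subset_suppB u he))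
  exact hWe.trans_le ((single_le_sum (fun _ _ => Nat.zero_le _) he).trans (Nat.le_add_right _ _))

theorem omegaW_eq_zero_iff (hw0 : ∀ a : F, w a = 0 ↔ a = 0) : omegaW w u = 0 ↔ u = 0 := by
  refine ⟨fun h => not_not.1 fun hu => (omegaW_pos hw0 hu).ne' h, ?_⟩
  rintro rfl
  have hideal : idealOf (0 : ∀ i, Fin (k i) → F) = ∅ :=
    subset_empty.1 <| idealOf_subset (by simp [isLowerSet_empty]) fun i hi =>
      absurd rfl (mem_suppB.1 hi)
  have := omegaW_le (w := w) (u := (0 : ∀ i, Fin (k i) → F))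
  rwa [hideal, card_empty, zero_mul, Nat.le_zero] at this

theorem injective_of_omegaW_map (hw0 : ∀ a : F, w a = 0 ↔ a = 0)
    {f : (∀ i, Fin (k i) → F) →ₗ[F] (∀ i, Fin (k i) → F)} (hf : ∀ u, omegaW w (f u) = omegaW w u) :
    Function.Injective f :=
  (injective_iff_map_eq_zero f).2 fun u hu => (omegaW_eq_zero_iff hw0).1 <| by
    rw [← hf, hu, omegaW_eq_zero_iff hw0]

theorem omegaW_of_top {t : ι} (hu : u ∈ blockSpace F k (pIdeal t)) (hut : u t ≠ 0) :
    omegaW w u = Wblk w u t + ((pIdeal t).erase t).card * Mw w := by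
  have hideal : idealOf u = pIdeal t :=
    (idealOf_subset (isLowerSet_pIdeal t) (mem_blockSpace.1 hu)).antisymm fun i hi =>
      mem_idealOf.2 ⟨t, mem_suppB.2 hut, mem_pIdeal.1 hi⟩
  have hmax : maxOf u = {t} := by
    ext e
    rw [mem_singleton, mem_maxOf, hideal]
    refine ⟨fun ⟨_, h⟩ => h t (mem_pIdeal_self t) (mem_pIdeal.1 ‹_›), ?_⟩
    rintro rfl
    exact ⟨mem_pIdeal_self _, fun j hj hej => hej.antisymm (mem_pIdeal.1 hj)⟩
  rw [omegaW, hideal, hmax, sum_singleton, sdiff_singleton_eq_erase]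

theorem omegaW_blockProj_const (hk : ∀ i, 0 < k i) {Q : Finset ι} (hQ : IsLowerSet (Q : Set ι))
    {c : F} (hc0 : c ≠ 0) (hc : w c = Mw w) :
    omegaW w (blockProj F k Q fun _ _ => c) = Q.card * Mw w := by
  set f := blockProj F k Q fun _ _ => c
  have hsupp : suppB f = Q := by
    rw [suppB_blockProj, inter_eq_right]
    exact fun i _ => mem_suppB.2 fun h => hc0 (congrFun h ⟨0, hk i⟩)
  have hideal : idealOf f = Q :=
    (idealOf_subset hQ hsupp.le).antisymm (hsupp ▸ suppB_subset_idealOf f)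
  have hdefect : defect w f = 0 := sum_eq_zero fun e he => by
    have heQ : e ∈ Q := hsupp ▸ maxOf_subset_suppB f he
    rw [Wblk_of_eq_const (c := c) (hk e) (by simp [f, blockProj_apply, heQ]), hc, Nat.sub_self]
  have := omegaW_add_defect (w := w) (u := f)
  rwa [hdefect, hideal, add_zero] at this

theorem card_le_card_of_map_mem_blockSpace (hw0 : ∀ a : F, w a = 0 ↔ a = 0) (hk : ∀ i, 0 < k i)
    (f : (∀ i, Fin (k i) → F) →ₗ[F] (∀ i, Fin (k i) → F)) (hf : ∀ u, omegaW w (f u) = omegaW w u)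
    {Q P : Finset ι} (hQ : IsLowerSet (Q : Set ι)) (hP : IsLowerSet (P : Set ι))
    (hQP : ∀ u ∈ blockSpace F k Q, f u ∈ blockSpace F k P) : Q.card ≤ P.card := by
  obtain ⟨c, hc⟩ := exists_eq_Mw w
  have hc0 := ne_zero_of_eq_Mw hw0 hc
  have hfill := hQP _ (blockProj_mem_blockSpace (u := fun _ _ => c))
  refine Nat.le_of_mul_le_mul_right ?_ (Mw_pos hw0)
  calc Q.card * Mw w = omegaW w (f (blockProj F k Q fun _ _ => c)) := by
        rw [hf, omegaW_blockProj_const hk hQ hc0 hc]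
    _ ≤ (idealOf (f (blockProj F k Q fun _ _ => c))).card * Mw w := omegaW_le
    _ ≤ P.card * Mw w :=
        Nat.mul_le_mul_right _ (card_le_card (idealOf_subset hP (mem_blockSpace.1 hfill)))

end Omega

section Rigidity
variable [Fintype ι] [PartialOrder ι] [Field F] [Fintype F] {k : ι → ℕ} {w : F → ℕ}
  {z : ∀ i, Fin (k i) → F} {A : Finset ι}

theorem subset_idealOf_of_omegaW_add_blockProj_const_le (hw0 : ∀ a : F, w a = 0 ↔ a = 0)
    (hk : ∀ i, 0 < k i) (hA : IsLowerSet (A : Set ι)) (hzA : Disjoint (suppB z) A) {c : F}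
    (hc : w c = Mw w) (h : omegaW w (z + blockProj F k A fun _ _ => c) ≤ omegaW w z) :
    A ⊆ idealOf z := by
  set y := z + blockProj F k A fun _ _ => c
  have hy_on : ∀ i ∈ A, y i = fun _ => c := fun i hi => by
    have hzi : z i = 0 := not_not.1 fun h => disjoint_left.1 hzA (mem_suppB.2 h) hi
    simp [y, blockProj_apply, hi, hzi]
  have hy_off : ∀ i ∉ A, y i = z i := fun i hi => by simp [y, blockProj_apply, hi]
  have hideal : idealOf y = idealOf z ∪ A := by
    refine idealOf_eq_of_suppB_eq_union hA (ext fun i => ?_)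
    by_cases hi : i ∈ A
    · simp only [mem_union, hi, or_true, iff_true, mem_suppB, hy_on i hi]
      exact fun h => ne_zero_of_eq_Mw hw0 hc (congrFun h ⟨0, hk i⟩)
    · simp [mem_suppB, hy_off i hi, hi]
  have hmax : (maxOf y).filter (· ∉ A) ⊆ maxOf z := fun e he => by
    obtain ⟨he, heA⟩ := mem_filter.1 he
    obtain ⟨he, hmaxy⟩ := mem_maxOf.1 he
    rw [hideal, mem_union, or_iff_left heA] at he
    exact mem_maxOf.2 ⟨he, fun j hj => hmaxy j (hideal ▸ mem_union_left _ hj)⟩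
  have hdefect : defect w y ≤ defect w z :=
    calc ∑ e ∈ maxOf y, (Mw w - Wblk w y e)
        = ∑ e ∈ (maxOf y).filter (· ∉ A), (Mw w - Wblk w y e) := by
          refine (sum_filter_of_ne fun e _ hne => ?_).symm
          intro heA
          rw [Wblk_of_eq_const (hk e) (hy_on e heA), hc, Nat.sub_self] at hne
          exact hne rfl
      _ = ∑ e ∈ (maxOf y).filter (· ∉ A), (Mw w - Wblk w z e) :=
          sum_congr rfl fun e he => by rw [Wblk_congr (hy_off e (mem_filter.1 he).2)]
      _ ≤ ∑ e ∈ maxOf z, (Mw w - Wblk w z e) := sum_le_sum_of_subset hmax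
  have hcard : (idealOf y).card ≤ (idealOf z).card := by
    refine Nat.le_of_mul_le_mul_right ?_ (Mw_pos hw0)
    rw [← omegaW_add_defect, ← omegaW_add_defect]
    exact add_le_add h hdefect
  rw [hideal] at hcard
  exact union_eq_left.1 (eq_of_subset_of_card_le subset_union_left hcard).symm

theorem sum_Wblk_suppB_eq_and_idealOf_eq (hw0 : ∀ a : F, w a = 0 ↔ a = 0)
    (hAz : A ⊆ idealOf z) (hzA : Disjoint (suppB z) A) (hz : z ≠ 0) {c : ℕ} (hc : c ≤ Mw w)
    (h : omegaW w z = c + A.card * Mw w) :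
    ∑ e ∈ suppB z, Wblk w z e = c ∧ idealOf z = A ∪ suppB z := by
  have hAsub : A ⊆ idealOf z \ maxOf z := fun a ha =>
    mem_sdiff.2 ⟨hAz ha, fun hm => disjoint_left.1 hzA (maxOf_subset_suppB z hm) ha⟩
  have hpos : 0 < ∑ e ∈ maxOf z, Wblk w z e :=
    sum_pos (fun e he => (Wblk_pos_iff hw0).2 (mem_suppB.1 (maxOf_subset_suppB z he)))
      (maxOf_nonempty hz)
  rw [omegaW] at h
  have hcard : (idealOf z \ maxOf z).card ≤ A.card := by
    by_contra! hlt
    have := Nat.mul_le_mul_right (Mw w) hlt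
    rw [Nat.succ_mul] at this
    omega
  have hA : idealOf z \ maxOf z = A := (eq_of_subset_of_card_le hAsub hcard).symm
  have hsupp : suppB z = maxOf z := (maxOf_subset_suppB z).antisymm' fun e he => by
    by_contra hm
    have : e ∈ A := hA ▸ mem_sdiff.2 ⟨suppB_subset_idealOf z he, hm⟩
    exact disjoint_left.1 hzA he this
  rw [hA] at h
  refine ⟨hsupp ▸ Nat.add_right_cancel h, ?_⟩
  rw [hsupp, ← hA, sdiff_union_of_subset (maxOf_subset_idealOf z)]

end Rigidity

section SingleBlock
variable [Fintype ι] [Field F] {k : ι → ℕ}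

theorem card_suppB_le_one [Fintype F] {w : F → ℕ} (hw0 : ∀ a : F, w a = 0 ↔ a = 0)
    {z : ∀ i, Fin (k i) → F} (h : ∀ α : F, α ≠ 0 → ∑ e ∈ suppB z, Wblk w (α • z) e ≤ Mw w) :
    (suppB z).card ≤ 1 := by
  by_contra! htwo
  obtain ⟨e₁, he₁, e₂, he₂, hne⟩ := one_lt_card.1 htwo
  obtain ⟨p, hp⟩ : ∃ p, z e₁ p ≠ 0 := Function.ne_iff.1 (mem_suppB.1 he₁)
  obtain ⟨c, hc⟩ := exists_eq_Mw w
  -- after rescaling, block `e₁` alone has weight `Mw w`, leaving no room for block `e₂`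
  set α := c * (z e₁ p)⁻¹
  have hα : α ≠ 0 := mul_ne_zero (ne_zero_of_eq_Mw hw0 hc) (inv_ne_zero hp)
  have hW₁ : Mw w ≤ Wblk w (α • z) e₁ := by
    have : (α • z) e₁ p = c := by simp [α, hp]
    exact hc ▸ this ▸ le_sup (f := fun q => w ((α • z) e₁ q)) (mem_univ p)
  have hW₂ : 0 < Wblk w (α • z) e₂ :=
    (Wblk_pos_iff hw0).2 (mem_suppB.1 ((suppB_smul hα z).symm ▸ he₂))
  have hsum : Wblk w (α • z) e₁ + Wblk w (α • z) e₂ ≤ ∑ e ∈ suppB z, Wblk w (α • z) e := by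
    rw [← sum_pair hne]
    exact sum_le_sum_of_subset (insert_subset he₁ (singleton_subset_iff.2 he₂))
  have := h α hα
  omega

theorem suppB_map_eq_of_card_eq_one {M : Type*} [AddCommGroup M] [Module F M]
    (f : M →ₗ[F] (∀ i, Fin (k i) → F)) {U : Submodule F M}
    (h : ∀ x ∈ U, x ≠ 0 → (suppB (f x)).card = 1) {x y : M} (hx : x ∈ U) (hx0 : x ≠ 0)
    (hy : y ∈ U) (hy0 : y ≠ 0) : suppB (f x) = suppB (f y) := by
  obtain ⟨a, ha⟩ := card_eq_one.1 (h x hx hx0)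
  obtain ⟨b, hb⟩ := card_eq_one.1 (h y hy hy0)
  rw [ha, hb, singleton_inj]
  by_contra hab
  have hxa : f x a ≠ 0 := mem_suppB.1 (ha ▸ mem_singleton_self a)
  have hyb : f y b ≠ 0 := mem_suppB.1 (hb ▸ mem_singleton_self b)
  have hya : f y a = 0 := not_not.1 fun h => hab (mem_singleton.1 (hb ▸ mem_suppB.2 h))
  have hxb : f x b = 0 := not_not.1 fun h => hab (mem_singleton.1 (ha ▸ mem_suppB.2 h)).symm
  by_cases hxy : x + y = 0
  · rw [eq_neg_of_add_eq_zero_right hxy, map_neg, Pi.neg_apply, hxb, neg_zero] at hyb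
    exact hyb rfl
  obtain ⟨c, hc⟩ := card_eq_one.1 (h (x + y) (U.add_mem hx hy) hxy)
  have hac : a ∈ suppB (f (x + y)) := mem_suppB.2 (by simpa [hya] using hxa)
  have hbc : b ∈ suppB (f (x + y)) := mem_suppB.2 (by simpa [hxb] using hyb)
  rw [hc, mem_singleton] at hac hbc
  exact hab (hac.trans hbc.symm)

end SingleBlock

section Isometry
variable [Fintype ι] [PartialOrder ι] [Field F] {k : ι → ℕ}

theorem exists_isLowerSet_forall_mem_blockSpace_iff
    (T : (∀ i, Fin (k i) → F) ≃ₗ[F] (∀ i, Fin (k i) → F)) {E : Finset ι}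
    (hE : IsLowerSet (E : Set ι))
    (h : ∀ s ∈ E, ∃ j, ∀ v, v ∈ blockSpace F k (pIdeal s) ↔ T v ∈ blockSpace F k (pIdeal j)) :
    ∃ A : Finset ι, IsLowerSet (A : Set ι) ∧
      ∀ v, v ∈ blockSpace F k E ↔ T v ∈ blockSpace F k A := by
  choose! σ hσ using h
  have hlower : IsLowerSet (E.biUnion (pIdeal ∘ σ) : Set ι) := fun a b hba ha => by
    obtain ⟨s, hs, ha⟩ := mem_biUnion.1 ha
    exact mem_biUnion.2 ⟨s, hs, isLowerSet_pIdeal _ hba ha⟩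
  refine ⟨E.biUnion (pIdeal ∘ σ), hlower, fun v => ⟨fun hv => ?_, fun hv => ?_⟩⟩
  · refine map_mem_of_forall_blockSpace_singleton T.toLinearMap (fun s hs x hx => ?_) hv
    have hxs : x ∈ blockSpace F k (pIdeal s) :=
      blockSpace_mono (singleton_subset_pIdeal _) hx
    exact blockSpace_mono (subset_biUnion_of_mem (pIdeal ∘ σ) hs) ((hσ s hs x).1 hxs)
  · rw [← T.symm_apply_apply v]
    refine map_mem_of_forall_blockSpace_singleton T.symm.toLinearMap (fun a ha x hx => ?_) hv
    obtain ⟨s, hs, has⟩ := mem_biUnion.1 ha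
    have hx' : T (T.symm x) ∈ blockSpace F k (pIdeal (σ s)) := by
      rw [T.apply_symm_apply]
      exact blockSpace_mono (singleton_subset_iff.2 has) hx
    exact blockSpace_mono (fun i hi => hE (mem_pIdeal.1 hi) hs) ((hσ s hs _).2 hx')

variable [Fintype F] {w : F → ℕ}

theorem omegaW_symm_apply (T : (∀ i, Fin (k i) → F) ≃ₗ[F] (∀ i, Fin (k i) → F))
    (hT : ∀ u, omegaW w (T u) = omegaW w u) (u : ∀ i, Fin (k i) → F) :
    omegaW w (T.symm u) = omegaW w u := by
  rw [← hT, T.apply_symm_apply]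

theorem omegaW_blockProj_compl_add (T : (∀ i, Fin (k i) → F) ≃ₗ[F] (∀ i, Fin (k i) → F))
    (hT : ∀ u, omegaW w (T u) = omegaW w u) {t : ι} {A : Finset ι}
    (hTA : ∀ u ∈ blockSpace F k A, T.symm u ∈ blockSpace F k ((pIdeal t).erase t))
    {v : ∀ i, Fin (k i) → F} (hv : v ∈ blockSpace F k {t}) (hvt : v t ≠ 0)
    {g : ∀ i, Fin (k i) → F} (hg : g ∈ blockSpace F k A) :
    omegaW w (blockProj F k Aᶜ (T v) + g) = Wblk w v t + ((pIdeal t).erase t).card * Mw w := by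
  set x := T.symm (g - blockProj F k A (T v))
  have hx : x ∈ blockSpace F k ((pIdeal t).erase t) :=
    hTA _ (sub_mem hg blockProj_mem_blockSpace)
  have hxt : (v + x) t = v t := by
    rw [Pi.add_apply, apply_eq_zero_of_mem_blockSpace hx (notMem_erase t _), add_zero]
  have hvx : v + x ∈ blockSpace F k (pIdeal t) :=
    add_mem (blockSpace_mono (singleton_subset_pIdeal _) hv)
      (blockSpace_mono (erase_subset t _) hx)
  have heq : blockProj F k Aᶜ (T v) + g = T (v + x) := by
    rw [map_add, T.apply_symm_apply]
    nth_rw 2 [← blockProj_add_blockProj_compl A (T v)]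
    abel
  rw [heq, hT, omegaW_of_top hvx (hxt ▸ hvt), Wblk_congr hxt]

theorem sum_Wblk_suppB_blockProj_compl_and_idealOf (hw0 : ∀ a : F, w a = 0 ↔ a = 0)
    (hk : ∀ i, 0 < k i) (T : (∀ i, Fin (k i) → F) ≃ₗ[F] (∀ i, Fin (k i) → F))
    (hT : ∀ u, omegaW w (T u) = omegaW w u) {t : ι} {A : Finset ι} (hA : IsLowerSet (A : Set ι))
    (hcard : A.card = ((pIdeal t).erase t).card)
    (hTA : ∀ u ∈ blockSpace F k A, T.symm u ∈ blockSpace F k ((pIdeal t).erase t))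
    {v : ∀ i, Fin (k i) → F} (hv : v ∈ blockSpace F k {t}) (hv0 : v ≠ 0) :
    ∑ e ∈ suppB (blockProj F k Aᶜ (T v)), Wblk w (blockProj F k Aᶜ (T v)) e = Wblk w v t ∧
      idealOf (blockProj F k Aᶜ (T v)) = A ∪ suppB (blockProj F k Aᶜ (T v)) := by
  have hvt := (apply_ne_zero_iff_of_mem_blockSpace_singleton hv).2 hv0
  set z := blockProj F k Aᶜ (T v) with hz
  have hconst : ∀ g ∈ blockSpace F k A, omegaW w (z + g) = Wblk w v t + A.card * Mw w :=
    fun g hg => hcard ▸ omegaW_blockProj_compl_add T hT hTA hv hvt hg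
  have hz_eq : omegaW w z = Wblk w v t + A.card * Mw w := by
    simpa using hconst 0 (zero_mem _)
  have hzA : Disjoint (suppB z) A := by
    rw [suppB_blockProj]
    exact disjoint_left.2 fun i hi hiA => mem_compl.1 (mem_inter.1 hi).2 hiA
  have hz0 : z ≠ 0 := by
    intro h
    have hTv : T v ∈ blockSpace F k A := by
      rw [← blockProj_add_blockProj_compl A (T v), ← hz, h, add_zero]
      exact blockProj_mem_blockSpace
    exact hvt (apply_eq_zero_of_mem_blockSpace (by simpa using hTA _ hTv) (notMem_erase t _))
  obtain ⟨c, hc⟩ := exists_eq_Mw w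
  have hAz : A ⊆ idealOf z := subset_idealOf_of_omegaW_add_blockProj_const_le hw0 hk hA hzA hc
    ((hconst _ blockProj_mem_blockSpace).trans hz_eq.symm).le
  exact sum_Wblk_suppB_eq_and_idealOf_eq hw0 hAz hzA hz0 Wblk_le_Mw hz_eq

theorem exists_pIdeal_eq_insert_forall_suppB_blockProj_compl_eq (hw0 : ∀ a : F, w a = 0 ↔ a = 0)
    (hk : ∀ i, 0 < k i) (T : (∀ i, Fin (k i) → F) ≃ₗ[F] (∀ i, Fin (k i) → F))
    (hT : ∀ u, omegaW w (T u) = omegaW w u) {t : ι} {A : Finset ι} (hA : IsLowerSet (A : Set ι))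
    (hcard : A.card = ((pIdeal t).erase t).card)
    (hTA : ∀ u ∈ blockSpace F k A, T.symm u ∈ blockSpace F k ((pIdeal t).erase t)) :
    ∃ j, j ∉ A ∧ pIdeal j = insert j A ∧ ∀ v ∈ blockSpace F k {t}, v ≠ 0 →
      suppB (blockProj F k Aᶜ (T v)) = {j} ∧ Wblk w (T v) j = Wblk w v t := by
  have hper := fun v (hv : v ∈ blockSpace F k {t}) hv0 =>
    sum_Wblk_suppB_blockProj_compl_and_idealOf (w := w) hw0 hk T hT hA hcard hTA hv hv0
  have hone : ∀ v ∈ blockSpace F k {t}, v ≠ 0 → (suppB (blockProj F k Aᶜ (T v))).card = 1 := by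
    intro v hv hv0
    refine le_antisymm (card_suppB_le_one hw0 fun α hα => ?_) (card_pos.2 ?_)
    · have := (hper (α • v) (Submodule.smul_mem _ α hv) (smul_ne_zero hα hv0)).1
      rw [map_smul, map_smul, suppB_smul hα] at this
      exact this ▸ Wblk_le_Mw
    · refine nonempty_of_sum_ne_zero (f := Wblk w (blockProj F k Aᶜ (T v))) ?_
      rw [(hper v hv hv0).1]
      exact ((Wblk_pos_iff hw0).2 ((apply_ne_zero_iff_of_mem_blockSpace_singleton hv).2 hv0)).ne'
  obtain ⟨x₀, hx₀, hx₀0⟩ := exists_mem_blockSpace_singleton_ne_zero (F := F) (hk t)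
  obtain ⟨j, hj⟩ := card_eq_one.1 (hone x₀ hx₀ hx₀0)
  have hsupp : ∀ v ∈ blockSpace F k {t}, v ≠ 0 → suppB (blockProj F k Aᶜ (T v)) = {j} :=
    fun v hv hv0 => hj ▸ suppB_map_eq_of_card_eq_one ((blockProj F k Aᶜ).comp T.toLinearMap)
      hone hv hv0 hx₀ hx₀0
  have hjA : j ∉ A := by
    have := hj ▸ mem_singleton_self j
    rw [suppB_blockProj, mem_inter, mem_compl] at this
    exact this.2
  refine ⟨j, hjA, ?_, fun v hv hv0 => ⟨hsupp v hv hv0, ?_⟩⟩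
  · rw [← idealOf_of_suppB_eq_singleton hj, (hper x₀ hx₀ hx₀0).2, hj, union_comm, ← insert_eq]
  · have := (hper v hv hv0).1
    rw [hsupp v hv hv0, sum_singleton, Wblk_congr (v := T v)] at this
    · exact this
    · rw [blockProj_apply, if_pos (mem_compl.2 hjA)]

theorem exists_pIdeal_map_mem_blockSpace (hw0 : ∀ a : F, w a = 0 ↔ a = 0) (hk : ∀ i, 0 < k i)
    (T : (∀ i, Fin (k i) → F) ≃ₗ[F] (∀ i, Fin (k i) → F))
    (hT : ∀ u, omegaW w (T u) = omegaW w u) (t : ι)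
    (hlt : ∀ s < t, ∃ j, ∀ v, v ∈ blockSpace F k (pIdeal s) ↔ T v ∈ blockSpace F k (pIdeal j)) :
    ∃ j, (pIdeal j).card = (pIdeal t).card ∧
      (∀ v ∈ blockSpace F k (pIdeal t), T v ∈ blockSpace F k (pIdeal j)) ∧
      (∀ v ∈ blockSpace F k {t}, v ≠ 0 → T v j ≠ 0 ∧ Wblk w (T v) j = Wblk w v t) ∧
      ∀ u ∈ blockSpace F k ((pIdeal j).erase j),
        T.symm u ∈ blockSpace F k ((pIdeal t).erase t) := by
  obtain ⟨A, hA, hEA⟩ := exists_isLowerSet_forall_mem_blockSpace_iff T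
    (isLowerSet_pIdeal_erase t) fun s hs => hlt s (mem_pIdeal_erase.1 hs)
  have hTA : ∀ u ∈ blockSpace F k A, T.symm u ∈ blockSpace F k ((pIdeal t).erase t) :=
    fun u hu => (hEA _).2 (by rwa [T.apply_symm_apply])
  have hTs := omegaW_symm_apply T hT
  have hcard : A.card = ((pIdeal t).erase t).card := le_antisymm
    (card_le_card_of_map_mem_blockSpace hw0 hk T.symm.toLinearMap hTs hA
      (isLowerSet_pIdeal_erase t) hTA)
    (card_le_card_of_map_mem_blockSpace hw0 hk T.toLinearMap hT (isLowerSet_pIdeal_erase t) hA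
      fun v hv => (hEA v).1 hv)
  obtain ⟨j, hjA, hpj, htop⟩ :=
    exists_pIdeal_eq_insert_forall_suppB_blockProj_compl_eq hw0 hk T hT hA hcard hTA
  refine ⟨j, ?_, fun v hv => ?_, fun v hv hv0 => ⟨?_, (htop v hv hv0).2⟩, ?_⟩
  · rw [hpj, card_insert_of_notMem hjA, hcard, card_erase_add_one (mem_pIdeal_self t)]
  · refine map_mem_of_forall_blockSpace_singleton T.toLinearMap (fun s hs x hx => ?_) hv
    obtain rfl | hst := eq_or_ne s t
    · obtain rfl | hx0 := eq_or_ne x 0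
      · simp
      rw [LinearEquiv.coe_coe, mem_blockSpace, hpj, insert_eq, union_comm, ← (htop x hx hx0).1]
      exact suppB_subset_union_suppB_blockProj_compl A (T x)
    · have hsE : s ∈ (pIdeal t).erase t := mem_erase.2 ⟨hst, hs⟩
      exact blockSpace_mono (hpj ▸ subset_insert j A)
        ((hEA x).1 (blockSpace_mono (singleton_subset_iff.2 hsE) hx))
  · have := (htop v hv hv0).1 ▸ mem_singleton_self j
    rw [mem_suppB, blockProj_apply, if_pos (mem_compl.2 hjA)] at this
    exact this
  · rw [hpj, erase_insert hjA]
    exact hTA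

theorem exists_forall_mem_blockSpace_pIdeal_iff (hw0 : ∀ a : F, w a = 0 ↔ a = 0)
    (hk : ∀ i, 0 < k i) (T : (∀ i, Fin (k i) → F) ≃ₗ[F] (∀ i, Fin (k i) → F))
    (hT : ∀ u, omegaW w (T u) = omegaW w u) (t : ι) :
    ∃ j, ∀ v, v ∈ blockSpace F k (pIdeal t) ↔ T v ∈ blockSpace F k (pIdeal j) := by
  obtain ⟨n, hn⟩ : ∃ n, (pIdeal t).card = n := ⟨_, rfl⟩
  induction n using Nat.strong_induction_on generalizing T t with
  | _ n ih =>
  have hTs := omegaW_symm_apply T hT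
  obtain ⟨j, hcard, hmaps, htop, hback⟩ := exists_pIdeal_map_mem_blockSpace hw0 hk T hT t
    fun s hs => ih _ (hn ▸ card_pIdeal_lt_card_pIdeal hs) T hT s rfl
  obtain ⟨j', -, hmaps', htop', -⟩ := exists_pIdeal_map_mem_blockSpace hw0 hk T.symm hTs j
    fun s hs => ih _ (hn ▸ hcard ▸ card_pIdeal_lt_card_pIdeal hs) T.symm hTs s rfl
  -- `T⁻¹` sends the `j`-block of `T x₀` back into `V_⟨t⟩`, which locates `j'` below `t`.
  have hj't : j' ≤ t := by
    obtain ⟨x₀, hx₀, hx₀0⟩ := exists_mem_blockSpace_singleton_ne_zero (F := F) (hk t)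
    have hx₀t : x₀ ∈ blockSpace F k (pIdeal t) :=
      blockSpace_mono (singleton_subset_pIdeal _) hx₀
    set y := blockProj F k {j} (T x₀)
    have hy0 : y ≠ 0 := (apply_ne_zero_iff_of_mem_blockSpace_singleton blockProj_mem_blockSpace).1
      (by rw [blockProj_apply, if_pos (mem_singleton_self j)]; exact (htop x₀ hx₀ hx₀0).1)
    have hrest : T.symm (blockProj F k {j}ᶜ (T x₀)) ∈ blockSpace F k (pIdeal t) :=
      blockSpace_mono (erase_subset t _) (hback _ (mem_blockSpace.2
        (suppB_blockProj_compl_singleton_subset (hmaps x₀ hx₀t))))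
    have hSy : T.symm y = x₀ - T.symm (blockProj F k {j}ᶜ (T x₀)) := by
      rw [eq_sub_iff_add_eq, ← map_add, blockProj_add_blockProj_compl, T.symm_apply_apply]
    have := (htop' y blockProj_mem_blockSpace hy0).1
    exact mem_pIdeal.1 (mem_blockSpace.1 (hSy ▸ sub_mem hx₀t hrest) (mem_suppB.2 this))
  refine ⟨j, fun v => ⟨hmaps v, fun hv => ?_⟩⟩
  rw [← T.symm_apply_apply v]
  exact blockSpace_mono (pIdeal_subset_pIdeal hj't) (hmaps' _ hv)

end Isometry

theorem stmt8_general [Fintype ι] [PartialOrder ι] [Field F] [Fintype F] {k : ι → ℕ}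
    (hk : ∀ i, 0 < k i)
    (w : F → ℕ)
    (hw0 : ∀ a : F, w a = 0 ↔ a = 0)
    (T : (∀ i, Fin (k i) → F) →ₗ[F] (∀ i, Fin (k i) → F))
    (hT : ∀ u : ∀ i, Fin (k i) → F, omegaW w (T u) = omegaW w u) :
    ∀ i : ι, ∃! j : ι,
      (pIdeal i).card = (pIdeal j).card ∧
      (∀ v : ∀ i, Fin (k i) → F, suppB v ⊆ {i} → suppB (T v) ⊆ pIdeal j) ∧
      (∀ v : ∀ i, Fin (k i) → F, suppB v ⊆ {i} → v ≠ 0 →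
        ∃ u γ : ∀ i, Fin (k i) → F, T v = u + γ ∧ suppB u ⊆ {j} ∧ u ≠ 0 ∧
          (∀ l ∈ suppB γ, l < j) ∧ Wblk w v i = Wblk w u j) := by
  intro i
  set Te := LinearEquiv.ofInjectiveEndo T (injective_of_omegaW_map hw0 hT)
  obtain ⟨j, hcard, hmaps, htop, -⟩ := exists_pIdeal_map_mem_blockSpace hw0 hk Te hT i
    fun s _ => exists_forall_mem_blockSpace_pIdeal_iff hw0 hk Te hT s
  simp only [Te, LinearEquiv.coe_ofInjectiveEndo] at hmaps htop
  have hmaps' : ∀ v, suppB v ⊆ {i} → T v ∈ blockSpace F k (pIdeal j) := fun v hv =>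
    hmaps v (blockSpace_mono (singleton_subset_pIdeal _) (mem_blockSpace.2 hv))
  refine ⟨j, ⟨hcard.symm, fun v hv => mem_blockSpace.1 (hmaps' v hv), fun v hv hv0 => ?_⟩, ?_⟩
  · obtain ⟨hTvj, hW⟩ := htop v (mem_blockSpace.2 hv) hv0
    obtain ⟨u, γ, hsum, hu, hu0, hγ, hWu⟩ :=
      exists_eq_add_of_mem_blockSpace_pIdeal (w := w) (hmaps' v hv) hTvj
    exact ⟨u, γ, hsum, hu, hu0, hγ, hW.symm.trans hWu⟩
  · rintro y ⟨-, hy, hdec⟩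
    obtain ⟨x₀, hx₀, hx₀0⟩ := exists_mem_blockSpace_singleton_ne_zero (F := F) (hk i)
    obtain ⟨u, γ, hTx₀, hu, hu0, hγ, -⟩ := hdec x₀ (mem_blockSpace.1 hx₀) hx₀0
    have hyT : y ∈ suppB (T x₀) := hTx₀ ▸ mem_suppB_add_of_forall_lt (mem_blockSpace.2 hu) hu0 hγ
    exact le_antisymm (mem_pIdeal.1 (mem_blockSpace.1 (hmaps' x₀ (mem_blockSpace.1 hx₀)) hyT))
      (mem_pIdeal.1 (hy x₀ (mem_blockSpace.1 hx₀) (mem_suppB.2 (htop x₀ hx₀ hx₀0).1)))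

/-- For a linear isometry `T` and each `i`, there is a unique `j` with
`T(V_i) ⊆ V_{⟨j⟩}` and `|⟨i⟩| = |⟨j⟩|`; moreover every nonzero `v_i ∈ V_i`
decomposes as `T v_i = u_j + γ_j` with `u_j ∈ V_j` nonzero, `γ_j ∈ V_{⟨j⟩*}`
and `W_i(v_i) = W_j(u_j)`. -/
theorem stmt8 [Fintype ι] [PartialOrder ι] [Field F] [Fintype F] {k : ι → ℕ}
    (hk : ∀ i, 0 < k i)
    (w : F → ℕ)
    (hw0 : ∀ a : F, w a = 0 ↔ a = 0)
    (hwneg : ∀ a : F, w (-a) = w a)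
    (hwadd : ∀ a b : F, w (a + b) ≤ w a + w b)
    (T : (∀ i, Fin (k i) → F) →ₗ[F] (∀ i, Fin (k i) → F))
    (hT : ∀ u : ∀ i, Fin (k i) → F, omegaW w (T u) = omegaW w u) :
    ∀ i : ι, ∃! j : ι,
      (pIdeal i).card = (pIdeal j).card ∧
      (∀ v : ∀ i, Fin (k i) → F, suppB v ⊆ {i} → suppB (T v) ⊆ pIdeal j) ∧
      (∀ v : ∀ i, Fin (k i) → F, suppB v ⊆ {i} → v ≠ 0 →
        ∃ u γ : ∀ i, Fin (k i) → F, T v = u + γ ∧ suppB u ⊆ {j} ∧ u ≠ 0 ∧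
          (∀ l ∈ suppB γ, l < j) ∧ Wblk w v i = Wblk w u j) :=
  stmt8_general hk w hw0 T hT
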